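/- On the complete graph K_n, if f is a configuration for which some permutation alpha of {1,...,n} satisfies f_{alpha(i)} = i - 1 for i = 1, ..., n-1, then rho(f) = -1 if f_{alpha(n)} < 0 and rho(f) = f_{alpha(n)} otherwise. -/

import Mathlib

/-- Laplacian configuration `Δ^(i)` of the multigraph given by edge-multiplicity matrix `e`. -/
def lapG {n : ℕ} (e : Fin n → Fin n → ℕ) (i : Fin n) : Fin n → ℤ :=
  fun j => if j = i then (∑ k, (e i k : ℤ)) else -(e i j : ℤ)

/-- Toppling equivalence: `f - g` lies in the lattice generated by the `Δ^(i)`. -/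
def topG {n : ℕ} (e : Fin n → Fin n → ℕ) (f g : Fin n → ℤ) : Prop :=
  ∃ a : Fin n → ℤ, f - g = ∑ i, a i • lapG e i

/-- `L_G`-effectiveness: toppling equivalent to a nonnegative configuration. -/
def effG {n : ℕ} (e : Fin n → Fin n → ℕ) (f : Fin n → ℤ) : Prop :=
  ∃ g : Fin n → ℤ, topG e f g ∧ ∀ i, 0 ≤ g i

/-- The Baker–Norine rank:
`rankG e f + 1 = min {deg λ | λ ≥ 0, f - λ not L_G-effective}`. -/
noncomputable def rankG {n : ℕ} (e : Fin n → Fin n → ℕ) (f : Fin n → ℤ) : ℤ :=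
  sInf {d : ℤ | ∃ lam : Fin n → ℤ,
    (∀ i, 0 ≤ lam i) ∧ (∑ i, lam i) = d ∧ ¬ effG e (f - lam)} - 1

/-- Edge multiplicities of the complete graph `K n`. -/
def eK (n : ℕ) : Fin n → Fin n → ℕ := fun i j => if i = j then 0 else 1

/-- Parking configuration on `K n` (with sink `n`, the last vertex). -/
def parkingK {n : ℕ} (f : Fin n → ℤ) : Prop :=
  (∀ i : Fin n, (i : ℕ) < n - 1 → 0 ≤ f i) ∧
    ∀ Y : Finset (Fin n), Y.Nonempty → (∀ i ∈ Y, (i : ℕ) < n - 1) →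
      ∃ k ∈ Y, f k < (n : ℤ) - (Y.card : ℤ)

/-!
Firing `a` on `K n` moves `f` by `n • a - ∑ a`, so `f` is effective iff some `c` satisfies
`c ≤ ∑ j, ⌊(f j + c) / n⌋`. Hermite's identity `∑_{c < n} ⌊(x + c) / n⌋ = x` then shows that a
configuration is not effective when, up to relabelling, it lies below `j ↦ j - 1`, and is
effective when its degree exceeds `∑_{c < n} (c - 1)`, the degree of `j ↦ j - 1`.
Relabelled by a rotation of `α`, `f` is `j ↦ j - 1` plus `t + 1` chips at one vertex, where
`t = f (α (n - 1))`: removing those chips costs `t + 1` and leaves a non-effective configuration,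
while removing at most `t` chips leaves degree above the threshold.
-/

open Finset

theorem sum_range_add_ediv {n : ℕ} (hn : 0 < n) (x : ℤ) :
    ∑ c ∈ range n, (x + c) / (n : ℤ) = x := by
  have hshift (y : ℤ) :
      ∑ c ∈ range n, (y + 1 + c) / (n : ℤ) = ∑ c ∈ range n, (y + c) / (n : ℤ) + 1 := by
    have h₁ := sum_range_succ' (fun c : ℕ => (y + c) / (n : ℤ)) n
    have h₂ := sum_range_succ (fun c : ℕ => (y + c) / (n : ℤ)) n
    have h₃ : (y + n) / (n : ℤ) = y / n + 1 := by
      rw [Int.add_ediv_of_dvd_right dvd_rfl, Int.ediv_self (by positivity)]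
    simp only [Nat.cast_add, Nat.cast_one, Nat.cast_zero, add_zero, h₃] at h₁ h₂
    simp only [add_assoc, add_comm (1 : ℤ)]
    omega
  induction x using Int.induction_on with
  | zero =>
    exact sum_eq_zero fun c hc => Int.ediv_eq_zero_of_lt (by simp) (by simpa using hc)
  | succ k ih => rw [hshift, ih]
  | pred k ih => have := hshift (-k - 1); simp only [sub_add_cancel] at this; omega

theorem lapG_eK_apply {n : ℕ} (i j : Fin n) :
    lapG (eK n) i j = (if j = i then (n : ℤ) else 0) - 1 := by
  by_cases h : j = i
  · subst h
    simp [lapG, eK, sum_ite, filter_ne, Nat.cast_sub (Nat.one_le_of_lt j.isLt)]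
  · simp [lapG, eK, h, Ne.symm h]

theorem sum_smul_lapG_eK_apply {n : ℕ} (a : Fin n → ℤ) (j : Fin n) :
    (∑ i, a i • lapG (eK n) i) j = n * a j - ∑ i, a i := by
  simp [Finset.sum_apply, lapG_eK_apply, mul_sub, sum_sub_distrib, mul_comm]

theorem exists_le_sum_eq {ι : Type*} [Fintype ι] [Nonempty ι] [DecidableEq ι] (b : ι → ℤ) {c : ℤ}
    (hc : c ≤ ∑ i, b i) : ∃ a ≤ b, ∑ i, a i = c := by
  obtain ⟨i₀⟩ := ‹Nonempty ι›
  refine ⟨b - Pi.single i₀ (∑ i, b i - c), fun i => ?_, by simp [sum_sub_distrib]⟩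
  by_cases h : i = i₀ <;> simp [h, hc]

theorem effG_eK_iff_exists_mul_le {n : ℕ} (f : Fin n → ℤ) :
    effG (eK n) f ↔ ∃ a : Fin n → ℤ, ∀ j, n * a j ≤ f j + ∑ i, a i := by
  constructor
  · rintro ⟨g, ⟨a, ha⟩, hg⟩
    refine ⟨a, fun j => ?_⟩
    have := congrFun ha j
    rw [Pi.sub_apply, sum_smul_lapG_eK_apply] at this
    linarith [hg j]
  · rintro ⟨a, ha⟩
    refine ⟨f - ∑ i, a i • lapG (eK n) i, ⟨a, by abel⟩, fun j => ?_⟩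
    rw [Pi.sub_apply, sum_smul_lapG_eK_apply]
    linarith [ha j]

theorem effG_eK_iff {n : ℕ} (hn : 0 < n) (f : Fin n → ℤ) :
    effG (eK n) f ↔ ∃ c : ℤ, c ≤ ∑ j, (f j + c) / (n : ℤ) := by
  have hn' : (0 : ℤ) < n := by exact_mod_cast hn
  rw [effG_eK_iff_exists_mul_le]
  constructor
  · rintro ⟨a, ha⟩
    refine ⟨∑ i, a i, sum_le_sum fun j _ => ?_⟩
    rw [Int.le_ediv_iff_mul_le hn', mul_comm]
    exact ha j
  · rintro ⟨c, hc⟩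
    have : Nonempty (Fin n) := ⟨⟨0, hn⟩⟩
    obtain ⟨a, hab, rfl⟩ := exists_le_sum_eq _ hc
    refine ⟨a, fun j => ?_⟩
    calc (n : ℤ) * a j ≤ (f j + ∑ i, a i) / n * n := by nlinarith [hab j]
      _ ≤ f j + ∑ i, a i := Int.ediv_mul_le _ hn'.ne'

theorem effG_eK_of_sum_lt {n : ℕ} (hn : 0 < n) {f : Fin n → ℤ}
    (h : ∑ c ∈ range n, ((c : ℤ) - 1) < ∑ j, f j) : effG (eK n) f := by
  by_contra hf
  rw [effG_eK_iff hn] at hf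
  push Not at hf
  have : ∑ j, f j ≤ ∑ c ∈ range n, ((c : ℤ) - 1) :=
    calc ∑ j, f j = ∑ c ∈ range n, ∑ j, (f j + c) / (n : ℤ) := by
          rw [sum_comm]; simp only [sum_range_add_ediv hn]
      _ ≤ ∑ c ∈ range n, ((c : ℤ) - 1) := sum_le_sum fun c _ => by linarith [hf c]
  omega

theorem not_effG_eK_of_le {n : ℕ} (hn : 0 < n) {f : Fin n → ℤ} (β : Equiv.Perm (Fin n))
    (h : ∀ j, f (β j) ≤ (j : ℤ) - 1) : ¬ effG (eK n) f := by
  rw [effG_eK_iff hn]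
  push Not
  intro c
  calc ∑ j, (f j + c) / (n : ℤ) = ∑ j, (f (β j) + c) / (n : ℤ) := (Equiv.sum_comp β _).symm
    _ ≤ ∑ j : Fin n, (c - 1 + (j : ℕ)) / (n : ℤ) :=
        sum_le_sum fun j _ => Int.ediv_le_ediv (by positivity) (by linarith [h j])
    _ = c - 1 := by
        rw [Fin.sum_univ_eq_sum_range (fun k => (c - 1 + k) / (n : ℤ))]
        exact sum_range_add_ediv hn _
    _ < c := sub_one_lt c

theorem rankG_eq_of_witness {n : ℕ} {e : Fin n → Fin n → ℕ} {f : Fin n → ℤ} {r : ℤ}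
    (hwit : ∃ lam : Fin n → ℤ, (∀ i, 0 ≤ lam i) ∧ ∑ i, lam i = r + 1 ∧ ¬ effG e (f - lam))
    (heff : ∀ lam : Fin n → ℤ, (∀ i, 0 ≤ lam i) → ∑ i, lam i ≤ r → effG e (f - lam)) :
    rankG e f = r := by
  have hleast : IsLeast {d : ℤ | ∃ lam : Fin n → ℤ,
      (∀ i, 0 ≤ lam i) ∧ (∑ i, lam i) = d ∧ ¬ effG e (f - lam)} (r + 1) := by
    refine ⟨hwit, ?_⟩
    rintro d ⟨lam, hlam, rfl, hne⟩
    by_contra hlt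
    exact hne (heff lam hlam (by omega))
  rw [rankG, hleast.csInf_eq, add_sub_cancel_right]

theorem rankG_eK_add_single {n : ℕ} (hn : 0 < n) {g : Fin n → ℤ} (β : Equiv.Perm (Fin n))
    (hg : ∀ j, g (β j) = (j : ℤ) - 1) (v : Fin n) (t : ℤ) :
    rankG (eK n) (g + Pi.single v (t + 1)) = if t < 0 then -1 else t := by
  split_ifs with ht
  · refine rankG_eq_of_witness ⟨0, fun _ => le_rfl, by simp, ?_⟩ fun lam hlam hdeg => ?_
    · refine not_effG_eK_of_le hn β fun j => ?_
      have : (Pi.single v (t + 1) : Fin n → ℤ) (β j) ≤ 0 := by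
        rw [Pi.single_apply]; split_ifs <;> omega
      simp only [sub_zero, Pi.add_apply, hg]
      linarith
    · linarith [sum_nonneg fun i (_ : i ∈ univ) => hlam i]
  · refine rankG_eq_of_witness ⟨Pi.single v (t + 1), fun i => ?_, by simp, ?_⟩
      fun lam hlam hdeg => ?_
    · rw [Pi.single_apply]; split_ifs <;> omega
    · exact not_effG_eK_of_le hn β fun j => by simp [hg]
    · refine effG_eK_of_sum_lt hn ?_
      have hsum : ∑ c ∈ range n, ((c : ℤ) - 1) = ∑ j, g j := by
        rw [← Equiv.sum_comp β g, ← Fin.sum_univ_eq_sum_range (fun c => (c : ℤ) - 1)]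
        simp only [hg]
      simp only [hsum, Pi.sub_apply, Pi.add_apply, sum_sub_distrib, sum_add_distrib, sum_pi_single',
        mem_univ, if_true]
      linarith

theorem exists_perm_comp_eq_sub_one {m : ℕ} {f : Fin (m + 1) → ℤ} (α : Equiv.Perm (Fin (m + 1)))
    (hα : ∀ i : Fin (m + 1), (i : ℕ) < m → f (α i) = (i : ℕ)) :
    ∃ β : Equiv.Perm (Fin (m + 1)), β 0 = α (Fin.last m) ∧ ∀ j ≠ 0, f (β j) = (j : ℤ) - 1 := by
  refine ⟨α * (finRotate (m + 1)).symm,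
    congrArg α ((Equiv.symm_apply_eq _).2 finRotate_last.symm), fun j hj => ?_⟩
  have hrot : (finRotate (m + 1)).symm j = j - 1 := by
    rw [Equiv.symm_apply_eq, finRotate_apply, sub_add_cancel]
  have hj' : (j : ℕ) ≠ 0 := Fin.val_ne_zero_iff.mpr hj
  rw [Equiv.Perm.mul_apply, hrot, hα _ (by rw [Fin.coe_sub_one, if_neg hj]; omega),
    Fin.coe_sub_one, if_neg hj]
  omega

theorem stmt14 (n : ℕ) (hn : 2 ≤ n) (f : Fin n → ℤ) (α : Equiv.Perm (Fin n))
    (hα : ∀ i : Fin n, (i : ℕ) < n - 1 → f (α i) = ((i : ℕ) : ℤ)) :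
    rankG (eK n) f =
      if f (α ⟨n - 1, by omega⟩) < 0 then -1 else f (α ⟨n - 1, by omega⟩) := by
  obtain ⟨m, rfl⟩ : ∃ m, n = m + 1 := ⟨n - 1, by omega⟩
  obtain ⟨β, hβ0, hβ⟩ := exists_perm_comp_eq_sub_one α fun i hi => hα i (by omega)
  have hlast : (⟨m + 1 - 1, by omega⟩ : Fin (m + 1)) = Fin.last m := Fin.ext (by simp)
  set t := f (α (Fin.last m))
  set g := f - Pi.single (β 0) (t + 1)
  have hg : ∀ j, g (β j) = (j : ℤ) - 1 := by
    intro j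
    rcases eq_or_ne j 0 with rfl | hj
    · simp [g, hβ0, t]
    · simp [g, hβ j hj, β.injective.ne hj]
  rw [hlast, ← rankG_eK_add_single (Nat.succ_pos m) β hg (β 0) t, sub_add_cancel]
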